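/- For all integers d ≥ 1 and ℓ ≥ 1, the formal power series B_{d,ℓ}(z) := Σ_{n ≥ 1} b_{d,ℓ}(n) z^n over ℚ satisfies B_{d,ℓ} = z^ℓ + z^ℓ·B_{d,ℓ} + d·z²·B_{d,ℓ} + d·z²·B_{d,ℓ}²; equivalently, d·z²·B_{d,ℓ}² − (1 − z^ℓ − d·z²)·B_{d,ℓ} + z^ℓ = 0. -/

import Mathlib

/-!
Give ∗ the weight ℓ and each operator the weight 2, so that `b d ℓ n` counts monomials of
total weight `n`. A monomial is an atom followed by an optional monomial, and an atom is ∗ or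
`P_i` applied to a monomial; weights add along both decompositions. Hence the weight
generating functions satisfy `B = A·(1 + B)` with `A = z^ℓ + d·z²·B`, which expands to the
stated equation. Since ℓ ≥ 1 every atom has positive weight, so each weight class is finite,
as the product rule for generating functions requires.
-/

namespace MultiOp

mutual
inductive Atom (d : ℕ) : Type where
  | star : Atom d
  | op : Fin d → Mon d → Atom d
inductive Mon (d : ℕ) : Type where
  | single : Atom d → Mon d
  | cons : Atom d → Mon d → Mon d
end

mutual
def Atom.deg {d : ℕ} : Atom d → ℕ
  | .star => 1
  | .op _ v => v.deg
def Mon.deg {d : ℕ} : Mon d → ℕ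
  | .single a => a.deg
  | .cons a v => a.deg + v.deg
end

mutual
def Atom.mult {d : ℕ} : Atom d → Fin d → ℕ
  | .star, _ => 0
  | .op i v, j => (if i = j then 1 else 0) + v.mult j
def Mon.mult {d : ℕ} : Mon d → Fin d → ℕ
  | .single a, j => a.mult j
  | .cons a v, j => a.mult j + v.mult j
end

noncomputable def a (d r : ℕ) (s : Fin d → ℕ) : ℕ :=
  Nat.card {v : Mon d // v.deg = r ∧ v.mult = s}

noncomputable def b (d ℓ n : ℕ) : ℕ :=
  Nat.card {v : Mon d // ℓ * v.deg + 2 * (∑ i, v.mult i) = n}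

noncomputable def A (d : ℕ) : MvPowerSeries (Option (Fin d)) ℚ :=
  fun e => (a d (e none) (fun i => e (some i)) : ℚ)

noncomputable def B (d ℓ : ℕ) : PowerSeries ℚ :=
  PowerSeries.mk fun n => (b d ℓ n : ℚ)

def narayana (n k : ℕ) : ℚ := (n.choose k * n.choose (k + 1) : ℚ) / n

end MultiOp

section WeightedCounting

open PowerSeries Finset

variable {α β ι : Type*}

noncomputable def genFun (R : Type*) [Semiring R] (w : α → ℕ) : R⟦X⟧ :=
  mk fun n => (Nat.card {x // w x = n} : R)

def fiberProdEquiv (wa : α → ℕ) (wb : β → ℕ) (n : ℕ) :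
    {p : α × β // wa p.1 + wb p.2 = n} ≃
      Σ ij : antidiagonal n, {a // wa a = ij.1.1} × {b // wb b = ij.1.2} where
  toFun p := ⟨⟨(wa p.1.1, wb p.1.2), mem_antidiagonal.mpr p.2⟩, ⟨p.1.1, rfl⟩, ⟨p.1.2, rfl⟩⟩
  invFun x := ⟨(x.2.1, x.2.2), by rw [x.2.1.2, x.2.2.2]; exact mem_antidiagonal.mp x.1.2⟩
  left_inv _ := rfl
  right_inv := by
    rintro ⟨⟨⟨i, j⟩, _⟩, ⟨a, ha⟩, ⟨b, hb⟩⟩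
    obtain rfl : wa a = i := ha
    obtain rfl : wb b = j := hb
    rfl

theorem finite_fiber_sumElim {wa : α → ℕ} {wb : β → ℕ}
    (ha : ∀ n, Finite {a // wa a = n}) (hb : ∀ n, Finite {b // wb b = n}) (n : ℕ) :
    Finite {x // Sum.elim wa wb x = n} :=
  have := ha n
  have := hb n
  .of_equiv ({a // wa a = n} ⊕ {b // wb b = n})
    (Equiv.subtypeSum (p := (Sum.elim wa wb · = n))).symm

theorem finite_fiber_prod {wa : α → ℕ} {wb : β → ℕ}
    (ha : ∀ n, Finite {a // wa a = n}) (hb : ∀ n, Finite {b // wb b = n}) (n : ℕ) :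
    Finite {p : α × β // wa p.1 + wb p.2 = n} :=
  have (ij : antidiagonal n) := ha ij.1.1
  have (ij : antidiagonal n) := hb ij.1.2
  .of_equiv _ (fiberProdEquiv wa wb n).symm

variable (R : Type*) [Semiring R]

@[simp]
theorem coeff_genFun (w : α → ℕ) (n : ℕ) : coeff n (genFun R w) = Nat.card {x // w x = n} :=
  coeff_mk _ _

theorem genFun_congr (e : α ≃ β) {wa : α → ℕ} {wb : β → ℕ} (h : ∀ a, wb (e a) = wa a) :
    genFun R wa = genFun R wb := by
  ext n
  simp only [coeff_genFun,
    Nat.card_congr (e.subtypeEquiv (p := (wa · = n)) (q := (wb · = n)) fun a => by rw [h])]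

theorem genFun_const [Finite ι] (k : ℕ) :
    genFun R (fun _ : ι => k) = (Nat.card ι : R⟦X⟧) * X ^ k := by
  ext n
  rw [coeff_genFun, ← map_natCast (C (R := R)), coeff_C_mul_X_pow]
  split_ifs with h
  · subst h
    exact congrArg _ (Nat.card_congr (Equiv.subtypeUnivEquiv fun _ => rfl))
  · simp [Ne.symm h]

theorem genFun_sumElim {wa : α → ℕ} {wb : β → ℕ}
    (ha : ∀ n, Finite {a // wa a = n}) (hb : ∀ n, Finite {b // wb b = n}) :
    genFun R (Sum.elim wa wb) = genFun R wa + genFun R wb := by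
  ext n
  have := ha n
  have := hb n
  simp only [coeff_genFun, map_add, Nat.card_congr Equiv.subtypeSum, Sum.elim_inl, Sum.elim_inr,
    Nat.card_sum, Nat.cast_add]

theorem genFun_prod {wa : α → ℕ} {wb : β → ℕ}
    (ha : ∀ n, Finite {a // wa a = n}) (hb : ∀ n, Finite {b // wb b = n}) :
    genFun R (fun p : α × β => wa p.1 + wb p.2) = genFun R wa * genFun R wb := by
  ext n
  have (ij : antidiagonal n) := ha ij.1.1
  have (ij : antidiagonal n) := hb ij.1.2
  rw [coeff_genFun, coeff_mul, Nat.card_congr (fiberProdEquiv wa wb n), Nat.card_sigma,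
    ← sum_coe_sort (antidiagonal n)]
  simp [Nat.card_prod]

end WeightedCounting

namespace MultiOp

open PowerSeries

variable {d : ℕ} (ℓ : ℕ)

def Atom.weight (a : Atom d) : ℕ := ℓ * a.deg + 2 * ∑ i, a.mult i

def Mon.weight (v : Mon d) : ℕ := ℓ * v.deg + 2 * ∑ i, v.mult i

@[simp]
theorem Atom.weight_star : (Atom.star : Atom d).weight ℓ = ℓ := by
  simp [Atom.weight, Atom.deg, Atom.mult]

@[simp]
theorem Atom.weight_op (i : Fin d) (u : Mon d) : (Atom.op i u).weight ℓ = 2 + u.weight ℓ := by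
  simp only [Atom.weight, Mon.weight, Atom.deg, Atom.mult, Finset.sum_add_distrib,
    Finset.sum_ite_eq, Finset.mem_univ, if_true]
  ring

@[simp]
theorem Mon.weight_single (a : Atom d) : (Mon.single a).weight ℓ = a.weight ℓ := rfl

@[simp]
theorem Mon.weight_cons (a : Atom d) (v : Mon d) :
    (Mon.cons a v).weight ℓ = a.weight ℓ + v.weight ℓ := by
  simp only [Mon.weight, Atom.weight, Mon.deg, Mon.mult, Finset.sum_add_distrib]
  ring

mutual
theorem Atom.one_le_deg : ∀ a : Atom d, 1 ≤ a.deg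
  | .star => le_rfl
  | .op _ v => v.one_le_deg
theorem Mon.one_le_deg : ∀ v : Mon d, 1 ≤ v.deg
  | .single a => a.one_le_deg
  | .cons a _ => a.one_le_deg.trans (Nat.le_add_right _ _)
end

variable {ℓ}

theorem Mon.one_le_weight (hℓ : 1 ≤ ℓ) (v : Mon d) : 1 ≤ v.weight ℓ :=
  le_add_right (Nat.mul_le_mul hℓ v.one_le_deg)

theorem Mon.finite_weight_lt (hℓ : 1 ≤ ℓ) (n : ℕ) : {v : Mon d | v.weight ℓ < n}.Finite := by
  induction n with
  | zero => simp
  | succ n ih =>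
    have hop : ((fun p : Fin d × Mon d => Atom.op p.1 p.2) '' (Set.univ ×ˢ
        {u | u.weight ℓ < n})).Finite := (Set.finite_univ.prod ih).image _
    -- atoms weigh at least 1, so the submonomials of a monomial of weight ≤ n weigh < n
    refine ((((Set.finite_singleton (Mon.single .star)).union (hop.image Mon.single)).union
      (ih.image (Mon.cons .star))).union ((hop.prod ih).image fun q => Mon.cons q.1 q.2)).subset ?_
    rintro (⟨_ | ⟨i, u⟩⟩ | ⟨_ | ⟨i, u⟩, v⟩) h <;> simp only [Set.mem_ofPred_eq, Mon.weight_single,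
      Mon.weight_cons, Atom.weight_star, Atom.weight_op] at h
    · simp
    · refine .inl (.inl (.inr ⟨.op i u, ⟨(i, u), ⟨trivial, ?_⟩, rfl⟩, rfl⟩))
      simp only [Set.mem_ofPred_eq]; omega
    · have := v.one_le_weight hℓ
      refine .inl (.inr ⟨v, ?_, rfl⟩)
      simp only [Set.mem_ofPred_eq]; omega
    · have := v.one_le_weight hℓ
      refine .inr ⟨(.op i u, v), ⟨⟨(i, u), ⟨trivial, ?_⟩, rfl⟩, ?_⟩, rfl⟩ <;>
        simp only [Set.mem_ofPred_eq] <;> omega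

theorem Mon.finite_fiber_weight (hℓ : 1 ≤ ℓ) (n : ℕ) : Finite {v : Mon d // v.weight ℓ = n} :=
  Set.Finite.to_subtype (s := {v : Mon d | v.weight ℓ = n}) <|
    (Mon.finite_weight_lt hℓ (n + 1)).subset fun v (hv : v.weight ℓ = n) => by simp [hv]

theorem Atom.finite_fiber_weight (hℓ : 1 ≤ ℓ) (n : ℕ) : Finite {a : Atom d // a.weight ℓ = n} :=
  have := Mon.finite_fiber_weight (d := d) hℓ n
  .of_injective (fun a => (⟨.single a.1, a.2⟩ : {v : Mon d // v.weight ℓ = n}))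
    fun _ _ h => Subtype.ext (Mon.single.inj (congrArg Subtype.val h))

def Atom.equivSum : Atom d ≃ Unit ⊕ Fin d × Mon d where
  toFun
    | .star => .inl ()
    | .op i u => .inr (i, u)
  invFun
    | .inl _ => .star
    | .inr (i, u) => .op i u
  left_inv a := by cases a <;> rfl
  right_inv x := by rcases x with _ | _ <;> rfl

def Mon.equivProd : Mon d ≃ Atom d × (Unit ⊕ Mon d) where
  toFun
    | .single a => (a, .inl ())
    | .cons a v => (a, .inr v)
  invFun
    | (a, .inl _) => .single a
    | (a, .inr v) => .cons a v
  left_inv v := by cases v <;> rfl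
  right_inv x := by rcases x with ⟨_, _ | _⟩ <;> rfl

theorem B_eq_genFun : B d ℓ = genFun ℚ (Mon.weight (d := d) ℓ) := rfl

theorem genFun_atom_weight (hℓ : 1 ≤ ℓ) :
    genFun ℚ (Atom.weight (d := d) ℓ) = X ^ ℓ + (d : ℚ⟦X⟧) * X ^ 2 * B d ℓ := by
  have hop : genFun ℚ (fun p : Fin d × Mon d => 2 + p.2.weight ℓ) = (d : ℚ⟦X⟧) * X ^ 2 * B d ℓ :=
    (genFun_prod ℚ (wa := fun _ => 2) (fun _ => inferInstance) (Mon.finite_fiber_weight hℓ)).trans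
      (by rw [genFun_const, Nat.card_fin, B_eq_genFun])
  rw [genFun_congr ℚ Atom.equivSum (wb := Sum.elim (fun _ => ℓ) fun p => 2 + p.2.weight ℓ)
      (by rintro (_ | _) <;> simp [Atom.equivSum]),
    genFun_sumElim ℚ (fun _ => inferInstance)
      (finite_fiber_prod (wa := fun _ => 2) (fun _ => inferInstance) (Mon.finite_fiber_weight hℓ)),
    hop, genFun_const]
  simp

theorem genFun_mon_weight (hℓ : 1 ≤ ℓ) :
    genFun ℚ (Mon.weight (d := d) ℓ) =
      genFun ℚ (Atom.weight (d := d) ℓ) * (1 + genFun ℚ (Mon.weight (d := d) ℓ)) := by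
  have hmon := Mon.finite_fiber_weight (d := d) hℓ
  refine (genFun_congr ℚ Mon.equivProd
      (wb := fun p => p.1.weight ℓ + Sum.elim (fun _ => 0) (Mon.weight ℓ) p.2)
      (by rintro (_ | _) <;> simp [Mon.equivProd])).trans ?_
  rw [genFun_prod ℚ (Atom.finite_fiber_weight hℓ)
      (finite_fiber_sumElim (fun _ => inferInstance) hmon),
    genFun_sumElim ℚ (fun _ => inferInstance) hmon, genFun_const]
  simp

open PowerSeries in
/-- The length-graded generating function `B_{d,ℓ}(z) = Σ_{n ≥ 1} b_{d,ℓ}(n) zⁿ` satisfies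
`B = z^ℓ + z^ℓ·B + d·z²·B + d·z²·B²`, equivalently
`d·z²·B² − (1 − z^ℓ − d·z²)·B + z^ℓ = 0`. -/
theorem B_functional_equation (d ℓ : ℕ) (hd : 1 ≤ d) (hl : 1 ≤ ℓ) :
    B d ℓ = (X : PowerSeries ℚ) ^ ℓ + X ^ ℓ * B d ℓ
        + (d : PowerSeries ℚ) * X ^ 2 * B d ℓ
        + (d : PowerSeries ℚ) * X ^ 2 * (B d ℓ) ^ 2 ∧
    (d : PowerSeries ℚ) * X ^ 2 * (B d ℓ) ^ 2
        - (1 - X ^ ℓ - (d : PowerSeries ℚ) * X ^ 2) * B d ℓ + X ^ ℓ = 0 := by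
  have h : B d ℓ = (X ^ ℓ + (d : ℚ⟦X⟧) * X ^ 2 * B d ℓ) * (1 + B d ℓ) := by
    rw [← genFun_atom_weight hl, B_eq_genFun]
    exact genFun_mon_weight hl
  exact ⟨by linear_combination h, by linear_combination -h⟩

end MultiOp
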